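/- arXiv:math/0607256 — 2 statements merged into one kernel-verified Lean document; each statement's English description precedes it below -/
import Mathlib

section
/- Let R be a positively graded Noetherian K-algebra and N a graded R-module such that there is a rational-function expression for the dimensions: dim_K N_{(k,j)} is given for j ≪ 0 by fixed polynomials in j as coefficients of a rational generating function in s of the form Q_j(s)/(1-s)^m with Q_j(s) = ∑_{r=0}^m B_r(j) s^r, B_r ∈ ℚ[j]. Then N is tame: there exists j_0 such that either N_j = 0 for all j ≤ j_0, or N_j ≠ 0 for all j ≤ j_0, where N_j = ⊕_k N_{(k,j)}. -/
/-!
For `j ≪ 0` the numerator `Q_j` of the Hilbert series of `N_j` is nonzero exactly when `N_j` is,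
since `(1 - s)^m` is a unit in `ℚ⟦s⟧`. If all `B_r` vanish, so does every `Q_j`; otherwise some
`B_r ≠ 0` has only finitely many integer roots, so `Q_j ≠ 0` for all sufficiently negative `j`.
-/

open Filter Polynomial

theorem Polynomial.eventually_atBot_eval_intCast_ne_zero {R : Type*} [CommRing R] [IsDomain R]
    [CharZero R] {p : R[X]} (hp : p ≠ 0) : ∀ᶠ j : ℤ in atBot, p.eval (j : R) ≠ 0 := by
  have hroots : {j : ℤ | p.eval (j : R) = 0}.Finite :=
    (p.finite_setOfPred_isRoot hp).preimage Int.cast_injective.injOn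
  have hcofinite := hroots.compl_mem_cofinite
  rw [Int.cofinite_eq] at hcofinite
  exact hcofinite.1

theorem Polynomial.forall_sum_C_eval_mul_X_pow_eq_zero_or_eventually_ne_zero {R : Type*}
    [CommRing R] [IsDomain R] [CharZero R] (s : Finset ℕ) (B : ℕ → R[X]) :
    (∀ j : ℤ, ∑ r ∈ s, C ((B r).eval (j : R)) * X ^ r = 0) ∨
      ∀ᶠ j : ℤ in atBot, ∑ r ∈ s, C ((B r).eval (j : R)) * X ^ r ≠ 0 := by
  by_cases hB : ∀ r ∈ s, B r = 0
  · exact Or.inl fun j => Finset.sum_eq_zero fun r hr => by simp [hB r hr]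
  · obtain ⟨r, hr, hBr⟩ : ∃ r ∈ s, B r ≠ 0 := by simpa using hB
    refine Or.inr ((eventually_atBot_eval_intCast_ne_zero hBr).mono fun j hj hsum => hj ?_)
    simpa [hr] using congrArg (coeff · r) hsum

theorem PowerSeries.mul_one_sub_X_pow_eq_zero_iff {R : Type*} [CommRing R] (m : ℕ)
    {f : PowerSeries R} : f * (1 - X) ^ m = 0 ↔ f = 0 :=
  (isUnit_iff_constantCoeff.2 (by simp)).pow m |>.mul_left_eq_zero

theorem PowerSeries.mk_finrank_eq_zero_iff_iSup_eq_bot {K M S : Type*} [DivisionRing K]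
    [AddCommGroup M] [Module K M] [Semiring S] [CharZero S] {N : ℕ → Submodule K M}
    [∀ i, FiniteDimensional K (N i)] :
    (mk fun i => (Module.finrank K (N i) : S)) = 0 ↔ ⨆ i, N i = ⊥ := by
  simp only [PowerSeries.ext_iff, coeff_mk, map_zero, Nat.cast_eq_zero, Submodule.finrank_eq_zero,
    iSup_eq_bot]

theorem stmt_17_general {K M : Type*} [Field K]
    [AddCommGroup M] [Module K M]
    (N : ℕ → ℤ → Submodule K M)
    (hfin : ∀ k j, FiniteDimensional K (N k j))
    (m : ℕ) (B : ℕ → Polynomial ℚ)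
    (hHilb : ∃ j₁ : ℤ, ∀ j : ℤ, j ≤ j₁ →
      (PowerSeries.mk fun k => ((Module.finrank K (N k j) : ℚ))) *
          (1 - PowerSeries.X) ^ m =
        ((∑ r ∈ Finset.range (m + 1),
          Polynomial.C ((B r).eval (j : ℚ)) * Polynomial.X ^ r : Polynomial ℚ) :
            PowerSeries ℚ)) :
    ∃ j₀ : ℤ, (∀ j : ℤ, j ≤ j₀ → (⨆ k : ℕ, N k j) = ⊥) ∨
      (∀ j : ℤ, j ≤ j₀ → (⨆ k : ℕ, N k j) ≠ ⊥) := by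
  obtain ⟨j₁, hH⟩ := hHilb
  have hvanish : ∀ j ≤ j₁, (⨆ k, N k j) = ⊥ ↔
      ∑ r ∈ Finset.range (m + 1), C ((B r).eval (j : ℚ)) * X ^ r = 0 := fun j hj => by
    have := (hfin · j)
    rw [← PowerSeries.mk_finrank_eq_zero_iff_iSup_eq_bot (S := ℚ),
      ← PowerSeries.mul_one_sub_X_pow_eq_zero_iff m, hH j hj, Polynomial.coe_eq_zero_iff]
  rcases forall_sum_C_eval_mul_X_pow_eq_zero_or_eventually_ne_zero (Finset.range (m + 1)) B
    with hzero | hne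
  · exact ⟨j₁, Or.inl fun j hj => (hvanish j hj).2 (hzero j)⟩
  · obtain ⟨j₀, hj₀⟩ := eventually_atBot.1 (hne.and (eventually_le_atBot j₁))
    exact ⟨j₀, Or.inr fun j hj => mt (hvanish j (hj₀ j hj).2).1 (hj₀ j hj).1⟩

/-- Let `R` be a positively graded Noetherian `K`-algebra and `N` a (bi)graded `R`-module,
with graded components `N_{(k,j)}` that are finite-dimensional `K`-vector spaces.  Suppose
that for `j ≪ 0` the generating function `∑_k dim_K N_{(k,j)} s^k` has the rational form
`Q_j(s)/(1-s)^m` where `Q_j(s) = ∑_{r=0}^m B_r(j) s^r` with fixed polynomials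
`B_r ∈ ℚ[j]`.  Then `N` is tame: there exists `j_0` such that either `N_j = ⊕_k N_{(k,j)}`
vanishes for all `j ≤ j_0`, or `N_j ≠ 0` for all `j ≤ j_0`. -/
theorem stmt_17 {K A M : Type*} [Field K] [CommRing A] [Algebra K A] [IsNoetherianRing A]
    (𝒜 : ℕ → Submodule K A) [GradedRing 𝒜]
    [AddCommGroup M] [Module A M] [Module K M] [IsScalarTower K A M]
    (N : ℕ → ℤ → Submodule K M)
    (hgraded : ∀ (i : ℕ) (k : ℕ) (j : ℤ) (a : A) (x : M),
      a ∈ 𝒜 i → x ∈ N k j → a • x ∈ N (k + i) j)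
    (hfin : ∀ k j, FiniteDimensional K (N k j))
    (m : ℕ) (B : ℕ → Polynomial ℚ)
    (hHilb : ∃ j₁ : ℤ, ∀ j : ℤ, j ≤ j₁ →
      (PowerSeries.mk fun k => ((Module.finrank K (N k j) : ℚ))) *
          (1 - PowerSeries.X) ^ m =
        ((∑ r ∈ Finset.range (m + 1),
          Polynomial.C ((B r).eval (j : ℚ)) * Polynomial.X ^ r : Polynomial ℚ) :
            PowerSeries ℚ)) :
    ∃ j₀ : ℤ, (∀ j : ℤ, j ≤ j₀ → (⨆ k : ℕ, N k j) = ⊥) ∨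
      (∀ j : ℤ, j ≤ j₀ → (⨆ k : ℕ, N k j) ≠ ⊥) :=
  stmt_17_general N hfin m B hHilb
end

section
/- Let S = K[X_1,...,X_m, Y_1,...,Y_n] with monomial ideal I, R = S/I, P = (y_1,...,y_n). Write each u ∈ G(I) as u = u_1 u_2 with u_1 a monomial in the X's and u_2 in the Y's. Let y = y_{i_1}···y_{i_r}, F = {i_1,...,i_r}. For a ∈ ℤ^m, b ∈ ℤ^n, the component (R_y)_{(a,b)} is isomorphic to K if and only if: F ⊇ G_b, a ∈ ℤ_{≥0}^m, and for every u ∈ G(I) either there exists j ∉ F with ν_j(u_2) > b_j ≥ 0, or there exists i with ν_i(u_1) > a_i ≥ 0. Moreover dim_K (R_y)_{(a,b)} ≤ 1 always. -/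
noncomputable section
set_option synthInstance.maxHeartbeats 400000
set_option maxHeartbeats 1000000

open MvPolynomial

variable {K : Type*} [Field K] {m n : ℕ}

/-- The `(a,b)`-th bigraded component of the localization `R_y` of `R = S/I` at the image
`y` of the squarefree monomial `∏_{j ∈ F} Y_j`:  the `K`-span of all fractions `r/y^l`
with `r` the class of a bihomogeneous element (a monomial times a scalar) whose
`ℤ^m × ℤ^n`-multidegree satisfies `multideg r - l·multideg y = (a,b)`. -/
def bigradedComponent (I : Ideal (MvPolynomial (Fin m ⊕ Fin n) K)) (F : Finset (Fin n))
    (a : Fin m → ℤ) (b : Fin n → ℤ) :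
    Submodule K (Localization.Away
      (Ideal.Quotient.mk I (∏ j ∈ F, (X (Sum.inr j) : MvPolynomial (Fin m ⊕ Fin n) K)))) :=
  Submodule.span K
    { z | ∃ (c : K) (d : (Fin m ⊕ Fin n) →₀ ℕ) (l : ℕ),
        (∀ i : Fin m, (d (Sum.inl i) : ℤ) = a i) ∧
        (∀ j : Fin n, (d (Sum.inr j) : ℤ) - l * (if j ∈ F then 1 else 0) = b j) ∧
        z = Localization.mk (Ideal.Quotient.mk I (monomial d c))
          (⟨(Ideal.Quotient.mk I (∏ j ∈ F, X (Sum.inr j))) ^ l, ⟨l, rfl⟩⟩ :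
            Submonoid.powers (Ideal.Quotient.mk I (∏ j ∈ F, X (Sum.inr j)))) }

private lemma prod_X_eq_monomial' {σ τ R : Type*} [CommSemiring R] (f : τ → σ) (s : Finset τ) :
    (∏ x ∈ s, X (f x) : MvPolynomial σ R) = monomial (∑ x ∈ s, Finsupp.single (f x) 1) 1 := by
  classical
  induction s using Finset.induction_on with
  | empty => simp
  | @insert x s hx ih =>
    rw [Finset.prod_insert hx, Finset.sum_insert hx, ih, X, monomial_mul, one_mul]


private lemma span_singleton_aux {R M : Type*} [Field R] [AddCommGroup M] [Module R M]
    (p : Submodule R M) (z : M) (hp : p = Submodule.span R {z}) :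
    (Nonempty (p ≃ₗ[R] R) ↔ z ≠ 0) ∧ Module.rank R p ≤ 1 := by
  constructor
  · constructor
    · rintro ⟨e⟩ hz
      rw [hz, Submodule.span_zero_singleton] at hp
      have hnt : Nontrivial p := Equiv.nontrivial e.toEquiv
      rw [hp] at hnt
      exact false_of_nontrivial_of_subsingleton (↥(⊥ : Submodule R M))
    · intro hz
      exact ⟨(LinearEquiv.ofEq _ _ hp).trans
        (LinearEquiv.toSpanNonzeroSingleton R M z hz).symm⟩
  · rw [hp]
    refine (rank_span_le _).trans ?_
    rw [Cardinal.mk_singleton]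

/-- The bigraded analogue of Takayama's Lemma.  Let `S = K[X_1,…,X_m,Y_1,…,Y_n]` with
monomial ideal `I` (with minimal monomial generating set `G(I)` recorded by the exponent
vectors `U`, an antichain under divisibility), `R = S/I`, `y = y_{i_1}⋯y_{i_r}`,
`F = {i_1,…,i_r}`.  Writing each `u ∈ G(I)` as `u = u₁u₂` with `u₁` a monomial in the
`X`'s and `u₂` in the `Y`'s:  for `a ∈ ℤ^m`, `b ∈ ℤ^n`, the component `(R_y)_{(a,b)}` is
isomorphic to `K` if and only if `F ⊇ G_b = {j : b_j < 0}`, `a ∈ ℤ^m_{≥0}`, and for every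
`u ∈ G(I)` either there exists `j ∉ F` with `ν_j(u₂) > b_j ≥ 0`, or there exists `i` with
`ν_i(u₁) > a_i ≥ 0`.  Moreover `dim_K (R_y)_{(a,b)} ≤ 1` always. -/
theorem stmt_18 (I : Ideal (MvPolynomial (Fin m ⊕ Fin n) K))
    (U : Finset ((Fin m ⊕ Fin n) →₀ ℕ))
    (hgen : I = Ideal.span
      ((fun d => (monomial d (1 : K) : MvPolynomial (Fin m ⊕ Fin n) K)) '' U))
    (hmin : ∀ d ∈ U, ∀ d' ∈ U, d ≤ d' → d = d')
    (F : Finset (Fin n)) (a : Fin m → ℤ) (b : Fin n → ℤ) :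
    (Nonempty ((bigradedComponent I F a b) ≃ₗ[K] K) ↔
      ((∀ j : Fin n, b j < 0 → j ∈ F) ∧ (∀ i : Fin m, 0 ≤ a i) ∧
        ∀ d ∈ U, (∃ j : Fin n, j ∉ F ∧ b j < (d (Sum.inr j) : ℤ) ∧ 0 ≤ b j) ∨
          (∃ i : Fin m, a i < (d (Sum.inl i) : ℤ) ∧ 0 ≤ a i))) ∧
      Module.rank K (bigradedComponent I F a b) ≤ 1 := by
  classical
  set q : MvPolynomial (Fin m ⊕ Fin n) K →+* _ := Ideal.Quotient.mk I with hq
  set Y : MvPolynomial (Fin m ⊕ Fin n) K := ∏ j ∈ F, X (Sum.inr j) with hYdef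
  -- the exponent vector of Y
  set eF : (Fin m ⊕ Fin n) →₀ ℕ := ∑ j ∈ F, Finsupp.single (Sum.inr j) 1 with heFdef
  have heF_inl : ∀ i : Fin m, eF (Sum.inl i) = 0 := by
    intro i
    simp [heFdef, Finsupp.finset_sum_apply, Finsupp.single_apply]
  have heF_inr : ∀ j : Fin n, eF (Sum.inr j) = if j ∈ F then 1 else 0 := by
    intro j
    simp [heFdef, Finsupp.finset_sum_apply, Finsupp.single_apply, Sum.inr.injEq,
      Finset.sum_ite_eq']
  have hYm : Y = monomial eF 1 := by
    rw [hYdef, heFdef]; exact prod_X_eq_monomial' Sum.inr F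
  have hYpow : ∀ l : ℕ, Y ^ l = monomial (l • eF) 1 := by
    intro l; rw [hYm, monomial_pow, one_pow]
  -- membership criterion for monomial ideals
  have hmem : ∀ e : (Fin m ⊕ Fin n) →₀ ℕ,
      (monomial e (1 : K)) ∈ I ↔ ∃ u ∈ U, u ≤ e := by
    intro e
    rw [hgen, mem_ideal_span_monomial_image]
    rw [support_monomial, if_neg (one_ne_zero : (1 : K) ≠ 0)]
    simp
  -- the generating set
  set Sset : Set (Localization.Away (q Y)) :=
    { z | ∃ (c : K) (d : (Fin m ⊕ Fin n) →₀ ℕ) (l : ℕ),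
        (∀ i : Fin m, (d (Sum.inl i) : ℤ) = a i) ∧
        (∀ j : Fin n, (d (Sum.inr j) : ℤ) - l * (if j ∈ F then 1 else 0) = b j) ∧
        z = Localization.mk (q (monomial d c))
          (⟨(q Y) ^ l, ⟨l, rfl⟩⟩ : Submonoid.powers (q Y)) } with hSdef
  have hBC : bigradedComponent I F a b = Submodule.span K Sset := rfl
  by_cases hA : (∀ i, 0 ≤ a i) ∧ (∀ j, j ∉ F → 0 ≤ b j)
  · -- the nondegenerate case
    obtain ⟨ha, hb⟩ := hA
    set l₀ : ℕ := ∑ j : Fin n, (b j).natAbs with hl₀def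
    have hl₀ : ∀ j : Fin n, (0 : ℤ) ≤ b j + l₀ := by
      intro j
      have : (b j).natAbs ≤ l₀ := by
        rw [hl₀def]
        exact Finset.single_le_sum (f := fun j => (b j).natAbs)
          (fun _ _ => Nat.zero_le _) (Finset.mem_univ j)
      omega
    set d₀ : (Fin m ⊕ Fin n) →₀ ℕ := Finsupp.equivFunOnFinite.symm
      (Sum.elim (fun i => (a i).toNat)
        (fun j => (b j + if j ∈ F then (l₀ : ℤ) else 0).toNat)) with hd₀def
    have hd₀l : ∀ i, d₀ (Sum.inl i) = (a i).toNat := fun i => rfl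
    have hd₀r : ∀ j, d₀ (Sum.inr j) = (b j + if j ∈ F then (l₀ : ℤ) else 0).toNat :=
      fun j => rfl
    set z₀ : Localization.Away (q Y) :=
      Localization.mk (q (monomial d₀ 1))
        (⟨(q Y) ^ l₀, ⟨l₀, rfl⟩⟩ : Submonoid.powers (q Y)) with hz₀def
    have hz₀mem : z₀ ∈ Sset := by
      rw [hSdef]
      refine ⟨1, d₀, l₀, fun i => ?_, fun j => ?_, rfl⟩
      · rw [hd₀l]; exact Int.toNat_of_nonneg (ha i)
      · rw [hd₀r]
        by_cases hj : j ∈ F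
        · rw [if_pos hj, if_pos hj, Int.toNat_of_nonneg (hl₀ j)]; ring
        · rw [if_neg hj, if_neg hj, add_zero, Int.toNat_of_nonneg (hb j hj)]; ring
    -- every generator is a scalar multiple of z₀
    have hsub : Sset ⊆ (Submodule.span K {z₀} : Submodule K _) := by
      rintro z ⟨c, d, l, h1, h2, rfl⟩
      have key : Localization.mk (q (monomial d c))
          (⟨(q Y) ^ l, ⟨l, rfl⟩⟩ : Submonoid.powers (q Y)) = c • z₀ := by
        have hsmul : c • z₀ = Localization.mk (q (monomial d₀ c))
            (⟨(q Y) ^ l₀, ⟨l₀, rfl⟩⟩ : Submonoid.powers (q Y)) := by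
          rw [hz₀def, Localization.smul_mk]
          congr 1
          have : c • (monomial d₀ (1 : K)) = monomial d₀ c := by
            rw [smul_monomial, smul_eq_mul, mul_one]
          rw [← this]
          exact (map_smul (Ideal.Quotient.mkₐ K I) c (monomial d₀ 1)).symm
        have hde : l • eF + d₀ = l₀ • eF + d := by
          ext s
          rcases s with i | j
          · have h1' := h1 i
            simp only [Finsupp.add_apply, Finsupp.smul_apply, smul_eq_mul,
              heF_inl, hd₀l]
            omega
          · have h2' := h2 j
            have hl₀j := hl₀ j
            simp only [Finsupp.add_apply, Finsupp.smul_apply, smul_eq_mul,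
              heF_inr, hd₀r]
            by_cases hj : j ∈ F
            · rw [if_pos hj] at h2' ⊢; rw [if_pos hj]; omega
            · rw [if_neg hj] at h2' ⊢; rw [if_neg hj]; omega
        rw [hsmul, Localization.mk_eq_mk'_apply, Localization.mk_eq_mk'_apply]
        apply IsLocalization.mk'_eq_of_eq
        show (q Y) ^ l * q (monomial d₀ c) = (q Y) ^ l₀ * q (monomial d c)
        rw [← map_pow, ← map_mul, ← map_pow, ← map_mul, hYpow, hYpow,
          monomial_mul, monomial_mul, one_mul, hde]
      rw [key]
      exact Submodule.smul_mem _ c (Submodule.subset_span rfl)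
    have hspan : bigradedComponent I F a b = Submodule.span K {z₀} := by
      rw [hBC]
      refine le_antisymm (Submodule.span_le.mpr hsub) ?_
      exact Submodule.span_mono (Set.singleton_subset_iff.mpr hz₀mem)
    -- characterization of z₀ = 0
    have hz₀zero : z₀ = 0 ↔ ∃ u ∈ U,
        (∀ i, (u (Sum.inl i) : ℤ) ≤ a i) ∧ (∀ j, j ∉ F → (u (Sum.inr j) : ℤ) ≤ b j) := by
      rw [hz₀def, Localization.mk_eq_mk'_apply, IsLocalization.mk'_eq_zero_iff]
      constructor
      · rintro ⟨⟨t, l', rfl⟩, ht⟩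
        simp only at ht
        rw [← map_pow, ← map_mul, hYpow, monomial_mul, one_mul,
          Ideal.Quotient.eq_zero_iff_mem] at ht
        obtain ⟨u, hu, hle⟩ := (hmem _).mp ht
        rw [Finsupp.le_def] at hle
        refine ⟨u, hu, fun i => ?_, fun j hj => ?_⟩
        · have := hle (Sum.inl i)
          simp only [Finsupp.add_apply, Finsupp.smul_apply, smul_eq_mul,
            heF_inl, hd₀l] at this
          have := ha i; omega
        · have := hle (Sum.inr j)
          simp only [Finsupp.add_apply, Finsupp.smul_apply, smul_eq_mul,
            heF_inr, hd₀r, if_neg hj, add_zero] at this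
          have := hb j hj; omega
      · rintro ⟨u, hu, hX, hYb⟩
        set l' : ℕ := ∑ j : Fin n, u (Sum.inr j) with hl'def
        refine ⟨⟨(q Y) ^ l', l', rfl⟩, ?_⟩
        simp only
        rw [← map_pow, ← map_mul, hYpow, monomial_mul, one_mul,
          Ideal.Quotient.eq_zero_iff_mem]
        refine (hmem _).mpr ⟨u, hu, ?_⟩
        rw [Finsupp.le_def]
        rintro (i | j)
        · have := hX i
          simp only [Finsupp.add_apply, Finsupp.smul_apply, smul_eq_mul,
            heF_inl, hd₀l]
          omega
        · simp only [Finsupp.coe_add, Pi.add_apply, Finsupp.coe_smul, Pi.smul_apply,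
            smul_eq_mul, heF_inr, hd₀r]
          by_cases hj : j ∈ F
          · have hle : u (Sum.inr j) ≤ l' := Finset.single_le_sum
              (f := fun j => u (Sum.inr j)) (fun _ _ => Nat.zero_le _) (Finset.mem_univ j)
            rw [if_pos hj, if_pos hj]
            omega
          · have := hYb j hj
            have := hb j hj
            rw [if_neg hj, if_neg hj]
            omega
    obtain ⟨hiff, hrank⟩ := span_singleton_aux _ z₀ hspan
    refine ⟨hiff.trans ?_, hrank⟩
    constructor
    · intro hz0
      refine ⟨fun j hbj => by_contra fun hj => absurd (hb j hj) (by omega), ha, ?_⟩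
      intro u hu
      by_contra hcon
      push_neg at hcon
      obtain ⟨hc1, hc2⟩ := hcon
      apply hz0
      rw [hz₀zero]
      refine ⟨u, hu, fun i => ?_, fun j hj => ?_⟩
      · have h' := hc2 i; have := ha i; omega
      · have h' := hc1 j hj; have := hb j hj; omega
    · rintro ⟨-, -, h3⟩
      rw [Ne, hz₀zero]
      rintro ⟨u, hu, hX, hYb⟩
      rcases h3 u hu with ⟨j, hj, hlt, -⟩ | ⟨i, hlt, -⟩
      · have := hYb j hj; omega
      · have := hX i; omega
  · -- degenerate case : the generating set is empty
    have hempty : ∀ z ∈ Sset, False := by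
      rintro z ⟨c, d, l, h1, h2, -⟩
      apply hA
      constructor
      · intro i; have := h1 i; omega
      · intro j hj; have := h2 j; rw [if_neg hj] at this; omega
    have hbot : bigradedComponent I F a b = Submodule.span K {(0 :
        Localization.Away (q Y))} := by
      have h0 : (Submodule.span K {(0 : Localization.Away (q Y))}) = ⊥ :=
        Submodule.span_zero_singleton (M := Localization.Away (q Y)) K
      rw [hBC, h0]
      exact Submodule.span_eq_bot.mpr fun x hx => absurd hx (fun h => hempty x h)
    obtain ⟨hiff, hrank⟩ := span_singleton_aux _ (0 : Localization.Away (q Y)) hbot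
    refine ⟨hiff.trans ?_, hrank⟩
    simp only [ne_eq, not_true_eq_false, false_iff]
    rintro ⟨h1, h2, -⟩
    exact hA ⟨h2, fun j hj => by_contra fun hbj => hj (h1 j (by omega))⟩
end
end
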